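/- arXiv:2407.06220 — 3 statements merged into one kernel-verified Lean document; each statement's English description precedes it below -/
import Mathlib

section
/- For integers b ≥ 0 and l > 1, the number of plane trees with b+l edges having exactly b+1 odd-level vertices and exactly l even-level vertices, all of which are internal vertices, equals (1/(l−1))·C(l+b−1, l−2)·C(b+1, l); for l = 1 this number equals 1. -/
open scoped BigOperators

attribute [local instance] Classical.propDecidable

/-- Generalized binomial coefficient `C(n,m)`, equal to `0` when `m < 0` or `m > n`. -/
def binom (n m : ℤ) : ℤ :=
  if 0 ≤ m ∧ m ≤ n then ((n.toNat).choose m.toNat : ℤ) else 0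

/-! ### RNA secondary structures

An RNA secondary structure on `[n]` is recorded by its set of arcs, each arc being an
ordered pair `(i, j)` with `i < j`. -/

/-- `A` is the arc set of an RNA secondary structure of length `n`: every arc `(i,j)`
satisfies `1 ≤ i`, `i + 2 ≤ j` (i.e. `|i - j| ≥ 2`), `j ≤ n`, and any two arcs whose
intervals intersect are nested. -/
def IsSecStr (n : ℕ) (A : Finset (ℕ × ℕ)) : Prop :=
  (∀ p ∈ A, 1 ≤ p.1 ∧ p.1 + 2 ≤ p.2 ∧ p.2 ≤ n) ∧
  (∀ p ∈ A, ∀ q ∈ A,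
    ((Finset.Icc p.1 p.2) ∩ (Finset.Icc q.1 q.2)).Nonempty →
      Finset.Icc p.1 p.2 ⊆ Finset.Icc q.1 q.2 ∨ Finset.Icc q.1 q.2 ⊆ Finset.Icc p.1 p.2)

/-- The isolated bases of the structure with arc set `A` on `[n]`. -/
def isolatedBases (n : ℕ) (A : Finset (ℕ × ℕ)) : Finset ℕ :=
  (Finset.Icc 1 n).filter fun m => ∀ p ∈ A, p.1 ≠ m ∧ p.2 ≠ m

/-- The set of RNA secondary structures (given by their arc sets) on `[2b+k]` with `b` arcs
and `k` isolated bases; together with the auxiliary arc `(0, 2b+k+1)` these are the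
"RNA secondary structures with `b+1` base pairs and `k` isolated bases". -/
def SecStr (b k : ℕ) : Set (Finset (ℕ × ℕ)) :=
  {A | IsSecStr (2*b+k) A ∧ A.card = b ∧ (isolatedBases (2*b+k) A).card = k}

/-- The arcs of the structure together with the auxiliary arc `(0, 2b+k+1)`. -/
def aarcs (b k : ℕ) (A : Finset (ℕ × ℕ)) : Finset (ℕ × ℕ) :=
  insert (0, 2*b+k+1) A

/-- The left-ends of the (augmented) arcs. -/
def leftEnds (b k : ℕ) (A : Finset (ℕ × ℕ)) : Finset ℕ :=
  (aarcs b k A).image Prod.fst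

/-- `x` starts a maximal run of consecutive left-ends, i.e. a partial stack. -/
def isRunStart (b k : ℕ) (A : Finset (ℕ × ℕ)) (x : ℕ) : Prop :=
  ∀ y ∈ leftEnds b k A, y + 1 ≠ x

/-- The multiset of lengths of the partial stacks of the structure (with auxiliary arc). -/
noncomputable def partialStackLens (b k : ℕ) (A : Finset (ℕ × ℕ)) : Multiset ℕ :=
  ((leftEnds b k A).filter (isRunStart b k A)).val.map fun x =>
    ((Finset.range (b+2)).filter fun m => ∀ i ≤ m, x + i ∈ leftEnds b k A).card

/-- The number of partial stacks of the structure (with auxiliary arc). -/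
noncomputable def numPartialStacks (b k : ℕ) (A : Finset (ℕ × ℕ)) : ℕ :=
  Multiset.card (partialStackLens b k A)

/-- The arc `p` is the outermost arc of a helix. -/
def isHelixStart (b k : ℕ) (A : Finset (ℕ × ℕ)) (p : ℕ × ℕ) : Prop :=
  ∀ q ∈ aarcs b k A, ¬ (q.1 + 1 = p.1 ∧ q.2 = p.2 + 1)

/-- The multiset of sizes of the helices of the structure (with auxiliary arc). -/
noncomputable def helixSizes (b k : ℕ) (A : Finset (ℕ × ℕ)) : Multiset ℕ :=
  ((aarcs b k A).filter (isHelixStart b k A)).val.map fun p =>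
    ((Finset.range (b+2)).filter fun m => ∀ i ≤ m, (p.1 + i, p.2 - i) ∈ aarcs b k A).card

/-- The number of helices of the structure (with auxiliary arc). -/
noncomputable def numHelices (b k : ℕ) (A : Finset (ℕ × ℕ)) : ℕ :=
  Multiset.card (helixSizes b k A)

/-- The arc `e` (properly) covers the arc `p`. -/
def coversArc (e p : ℕ × ℕ) : Prop :=
  Finset.Icc p.1 p.2 ⊂ Finset.Icc e.1 e.2

/-- The size of the loop of the arc `e`: the number of elements (arcs and isolated bases)
directly covered by `e`. -/
noncomputable def loopSize (b k : ℕ) (A : Finset (ℕ × ℕ)) (e : ℕ × ℕ) : ℕ :=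
  ((aarcs b k A).filter fun p => coversArc e p ∧
      ∀ q ∈ aarcs b k A, coversArc e q → ¬ coversArc q p).card +
  ((isolatedBases (2*b+k) A).filter fun m => e.1 < m ∧ m < e.2 ∧
      ∀ q ∈ aarcs b k A, coversArc e q → ¬ (q.1 < m ∧ m < q.2)).card

/-- The multiset of loop sizes of the structure (one loop for each arc, incl. auxiliary). -/
noncomputable def loopSizes (b k : ℕ) (A : Finset (ℕ × ℕ)) : Multiset ℕ :=
  (aarcs b k A).val.map (loopSize b k A)

/-! ### Plane trees -/

/-- A plane tree: a root with a linearly ordered (possibly empty) list of subtrees. -/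
inductive PlaneTree : Type
  | node : List PlaneTree → PlaneTree

/-- Given the list of leaf-flags of the children of an even-level vertex (`true` = leaf),
the list of sizes of its E-blocks: each E-block is a maximal run of consecutive
(odd-level) leaves together with the immediately following (odd-level) internal vertex,
if any. -/
def blockSizesAux : ℕ → List Bool → List ℕ
  | acc, [] => if acc = 0 then [] else [acc]
  | acc, c :: rest => if c then blockSizesAux (acc + 1) rest else (acc + 1) :: blockSizesAux 0 rest

namespace PlaneTree

/-- Number of edges. -/
def numEdges : PlaneTree → ℕ
  | node ts => (ts.attach.map fun t => numEdges t.1 + 1).sum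
termination_by t => sizeOf t
decreasing_by have := List.sizeOf_lt_of_mem t.2; simp_wf; omega

/-- Whether the root has no children. -/
def isLeafB : PlaneTree → Bool
  | node ts => ts.isEmpty

/-- Number of vertices at even levels (`even = true`) resp. odd levels (`even = false`). -/
def countVert (even : Bool) : PlaneTree → ℕ
  | node ts => (if even then 1 else 0) + (ts.attach.map fun t => countVert (!even) t.1).sum
termination_by t => sizeOf t
decreasing_by have := List.sizeOf_lt_of_mem t.2; simp_wf; omega

/-- Number of internal vertices at even (resp. odd) levels. -/
noncomputable def countInternal (even : Bool) : PlaneTree → ℕ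
  | node ts => (if even ∧ ts ≠ [] then 1 else 0) +
      (ts.attach.map fun t => countInternal (!even) t.1).sum
termination_by t => sizeOf t
decreasing_by have := List.sizeOf_lt_of_mem t.2; simp_wf; omega

/-- The multiset of outdegrees of the internal vertices at even (resp. odd) levels. -/
noncomputable def internalOutdegs (even : Bool) : PlaneTree → Multiset ℕ
  | node ts => (if even ∧ ts ≠ [] then ({ts.length} : Multiset ℕ) else 0) +
      (ts.attach.map fun t => internalOutdegs (!even) t.1).sum
termination_by t => sizeOf t
decreasing_by have := List.sizeOf_lt_of_mem t.2; simp_wf; omega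

/-- The multiset of outdegrees of all vertices at even (resp. odd) levels. -/
def levelOutdegs (even : Bool) : PlaneTree → Multiset ℕ
  | node ts => (if even then ({ts.length} : Multiset ℕ) else 0) +
      (ts.attach.map fun t => levelOutdegs (!even) t.1).sum
termination_by t => sizeOf t
decreasing_by have := List.sizeOf_lt_of_mem t.2; simp_wf; omega

/-- The multiset of sizes of E-blocks determined by the vertices at even (resp. odd) levels. -/
def eBlockSizes (even : Bool) : PlaneTree → Multiset ℕ
  | node ts => (if even then (↑(blockSizesAux 0 (ts.map isLeafB)) : Multiset ℕ) else 0) +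
      (ts.attach.map fun t => eBlockSizes (!even) t.1).sum
termination_by t => sizeOf t
decreasing_by have := List.sizeOf_lt_of_mem t.2; simp_wf; omega

/-- The number of E-blocks of a plane tree. -/
def numEBlocks (T : PlaneTree) : ℕ :=
  Multiset.card (eBlockSizes true T)

/-- The number of internal vertices at even (resp. odd) levels whose rightmost child
is a leaf. -/
noncomputable def rightLeafInternalCount (even : Bool) : PlaneTree → ℕ
  | node ts => (if even ∧ (ts.getLast?.elim False fun t => isLeafB t = true) then 1 else 0) +
      (ts.attach.map fun t => rightLeafInternalCount (!even) t.1).sum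
termination_by t => sizeOf t
decreasing_by have := List.sizeOf_lt_of_mem t.2; simp_wf; omega

end PlaneTree

/-!
Write `N(m, l)` for the number of plane trees with `m` odd-level and `l` even-level vertices,
all even-level ones internal. Cutting such a tree at the leftmost child `c` of its root either
deletes `c` (when `c` is a leaf) or detaches the leftmost subtree `u` of `c`, an even-rooted tree
of the same kind; what remains is again of that kind. This gives, for `(m, l) ≠ (0, 0)`,
`N(m+1, l+1) = N(m, l+1) + ∑ N(a, b) N(a', b')` over `a + a' = m + 1`, `b + b' = l + 1`.
The closed form `Cat(l-1) C(m+l-2, 2l-2)` satisfies the same recursion, by Pascal's rule, the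
Catalan recursion and the upper Vandermonde identity `∑_{i+j=n} C(i,p) C(j,q) = C(n+1, p+q+1)`.
For `m = b + 1` and `l ≥ 2` it equals the product in the statement.
-/

open Finset

theorem sum_antidiagonal_choose_mul_choose (p q n : ℕ) :
    ∑ x ∈ antidiagonal n, x.1.choose p * x.2.choose q = (n + 1).choose (p + q + 1) := by
  induction n generalizing q with
  | zero => cases p <;> cases q <;> simp [Nat.choose_eq_zero_of_lt]
  | succ n ih =>
    rw [Nat.sum_antidiagonal_succ']
    cases q with
    | zero =>
      have ih0 := ih 0
      simp only [Nat.choose_zero_right, mul_one, add_zero] at ih0 ⊢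
      rw [ih0, Nat.choose_succ_succ (n + 1) p, add_comm]
    | succ q =>
      simp only [Nat.choose_succ_succ', mul_add, sum_add_distrib, ih, Nat.choose_zero_succ,
        mul_zero, zero_add]
      rw [← Nat.choose_succ_succ']
      ring_nf

theorem sum_antidiagonal_add_choose_mul_add_choose {a b p q : ℕ} (ha : a ≤ p) (hb : b ≤ q)
    (n : ℕ) :
    ∑ x ∈ antidiagonal n, (x.1 + a).choose p * (x.2 + b).choose q =
      (n + a + b + 1).choose (p + q + 1) := by
  induction a generalizing n p with
  | zero =>
    induction b generalizing n q with
    | zero => simpa using sum_antidiagonal_choose_mul_choose p q n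
    | succ b ih =>
      obtain ⟨q, rfl⟩ : ∃ q', q = q' + 1 := ⟨q - 1, by omega⟩
      have := ih (q := q + 1) (by omega) (n + 1)
      rw [Nat.sum_antidiagonal_succ', zero_add, Nat.choose_eq_zero_of_lt (by omega : b < q + 1),
        mul_zero, zero_add] at this
      simpa [add_assoc, add_comm 1, add_left_comm] using this
  | succ a ih =>
    obtain ⟨p, rfl⟩ : ∃ p', p = p' + 1 := ⟨p - 1, by omega⟩
    have := ih (p := p + 1) (by omega) (n + 1)
    rw [Nat.sum_antidiagonal_succ, zero_add, Nat.choose_eq_zero_of_lt (by omega : a < p + 1),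
      zero_mul, zero_add] at this
    simpa [add_assoc, add_comm 1, add_left_comm] using this

theorem sum_antidiagonal_add_two {M : Type*} [AddCommMonoid M] {g : ℕ → ℕ → M}
    (h₀ : ∀ a, g 0 a = 0) (h₀' : ∀ a, g a 0 = 0) (n : ℕ) :
    ∑ x ∈ antidiagonal (n + 2), g x.1 x.2 = ∑ x ∈ antidiagonal n, g (x.1 + 1) (x.2 + 1) := by
  rw [Nat.sum_antidiagonal_succ, Nat.sum_antidiagonal_succ']
  simp [h₀, h₀']

theorem sum_antidiagonal_catalan_mul_choose (i j : ℕ) :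
    ∑ x ∈ antidiagonal i, ∑ y ∈ antidiagonal j,
        catalan y.1 * (x.1 + y.1).choose (2 * y.1) * (catalan y.2 * (x.2 + y.2).choose (2 * y.2)) =
      catalan (j + 1) * (i + j + 1).choose (2 * j + 1) := by
  rw [sum_comm, catalan_succ', sum_mul]
  refine sum_congr rfl fun y hy => ?_
  rw [HasAntidiagonal.mem_antidiagonal] at hy
  calc ∑ x ∈ antidiagonal i,
        catalan y.1 * (x.1 + y.1).choose (2 * y.1) * (catalan y.2 * (x.2 + y.2).choose (2 * y.2))
      = catalan y.1 * catalan y.2 *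
          ∑ x ∈ antidiagonal i, (x.1 + y.1).choose (2 * y.1) * (x.2 + y.2).choose (2 * y.2) := by
        rw [mul_sum]; exact sum_congr rfl fun _ _ => by ring
    _ = catalan y.1 * catalan y.2 * (i + j + 1).choose (2 * j + 1) := by
        rw [sum_antidiagonal_add_choose_mul_add_choose (by omega) (by omega), ← hy]
        congr 2 <;> ring

def convSq (f : ℕ → ℕ → ℕ) (m l : ℕ) : ℕ :=
  ∑ p ∈ antidiagonal m ×ˢ antidiagonal l, f p.1.1 p.2.1 * f p.1.2 p.2.2

structure SolvesGraftRecursion (f : ℕ → ℕ → ℕ) : Prop where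
  zero_left : ∀ l, f 0 l = 0
  zero_right : ∀ m, f m 0 = 0
  one_one : f 1 1 = 1
  succ_succ : ∀ {m l}, 0 < m + l → f (m + 1) (l + 1) = f m (l + 1) + convSq f (m + 1) (l + 1)

theorem SolvesGraftRecursion.unique {f g : ℕ → ℕ → ℕ} (hf : SolvesGraftRecursion f)
    (hg : SolvesGraftRecursion g) : f = g := by
  funext m l
  induction hn : m + l using Nat.strong_induction_on generalizing m l with
  | _ n ih =>
    rcases m with _ | m
    · rw [hf.zero_left, hg.zero_left]
    rcases l with _ | l
    · rw [hf.zero_right, hg.zero_right]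
    rcases (m + l).eq_zero_or_pos with h | h
    · obtain ⟨rfl, rfl⟩ : m = 0 ∧ l = 0 := by omega
      rw [hf.one_one, hg.one_one]
    rw [hf.succ_succ h, hg.succ_succ h, ih (m + l + 1) (by omega) m (l + 1) rfl]
    congr 1
    refine sum_congr rfl fun ⟨⟨a, a'⟩, ⟨b, b'⟩⟩ hp => ?_
    simp only [mem_product, HasAntidiagonal.mem_antidiagonal] at hp
    by_cases hz : a = 0 ∨ b = 0 ∨ a' = 0 ∨ b' = 0
    · rcases hz with rfl | rfl | rfl | rfl <;>
        simp [hf.zero_left, hf.zero_right, hg.zero_left, hg.zero_right]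
    · rw [ih (a + b) (by omega) a b rfl, ih (a' + b') (by omega) a' b' rfl]

def allEvenInternalCount : ℕ → ℕ → ℕ
  | i + 1, j + 1 => catalan j * (i + j).choose (2 * j)
  | _, _ => 0

@[simp] theorem allEvenInternalCount_zero_left (l : ℕ) : allEvenInternalCount 0 l = 0 := rfl

@[simp] theorem allEvenInternalCount_zero_right (m : ℕ) : allEvenInternalCount m 0 = 0 := by
  cases m <;> rfl

@[simp] theorem allEvenInternalCount_succ_succ (i j : ℕ) :
    allEvenInternalCount (i + 1) (j + 1) = catalan j * (i + j).choose (2 * j) := rfl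

theorem allEvenInternalCount_succ_succ_eq {m l : ℕ} (hml : 0 < m + l) :
    allEvenInternalCount (m + 1) (l + 1) =
      allEvenInternalCount m (l + 1) + convSq allEvenInternalCount (m + 1) (l + 1) := by
  rw [convSq, sum_product]
  rcases m with _ | i
  · simp [Nat.sum_antidiagonal_succ, Nat.choose_eq_zero_of_lt (by omega : l < 2 * l)]
  rcases l with _ | j
  · cases i <;> simp [Nat.sum_antidiagonal_succ]
  have outer := sum_antidiagonal_add_two (g := fun a a' => ∑ y ∈ antidiagonal (j + 2),
    allEvenInternalCount a y.1 * allEvenInternalCount a' y.2) (by simp) (by simp) i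
  have inner := fun a a' => sum_antidiagonal_add_two
    (g := fun b b' => allEvenInternalCount (a + 1) b * allEvenInternalCount (a' + 1) b')
    (by simp) (by simp) j
  simp only at outer inner ⊢
  simp only [outer, inner, allEvenInternalCount_succ_succ, sum_antidiagonal_catalan_mul_choose]
  rw [← mul_add, show i + 1 + (j + 1) = i + j + 1 + 1 by ring,
    show i + (j + 1) = i + j + 1 by ring, show 2 * (j + 1) = 2 * j + 1 + 1 by ring,
    Nat.choose_succ_succ' (i + j + 1), add_comm (Nat.choose _ (2 * j + 1))]

theorem solvesGraftRecursion_allEvenInternalCount : SolvesGraftRecursion allEvenInternalCount where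
  zero_left := allEvenInternalCount_zero_left
  zero_right := allEvenInternalCount_zero_right
  one_one := by simp [catalan_zero]
  succ_succ := allEvenInternalCount_succ_succ_eq

theorem binom_natCast (n k : ℕ) : binom n k = n.choose k := by
  unfold binom
  split_ifs with h
  · simp
  · rw [Nat.choose_eq_zero_of_lt (by omega)]
    simp

theorem succ_mul_catalan_mul_choose (b n : ℕ) :
    (n + 1) * (catalan (n + 1) * (b + n + 1).choose (2 * n + 2)) =
      (b + n + 1).choose n * (b + 1).choose (n + 2) := by
  apply Nat.eq_of_mul_eq_mul_left (show 0 < n + 2 by omega)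
  have central : (n + 2) * catalan (n + 1) = (2 * n + 2).choose (n + 1) :=
    succ_mul_catalan_eq_centralBinom (n + 1)
  have subset_choose : (b + n + 1).choose (2 * n + 2) * (2 * n + 2).choose (n + 1) =
      (b + n + 1).choose (n + 1) * b.choose (n + 1) := by
    rw [Nat.choose_mul (by omega)]
    congr 2 <;> omega
  have absorb₁ : (b + n + 1).choose (n + 1) * (n + 1) = (b + n + 1).choose n * (b + 1) := by
    rw [Nat.choose_succ_right_eq, show b + n + 1 - n = b + 1 by omega]
  have absorb₂ : (b + 1) * b.choose (n + 1) = (b + 1).choose (n + 2) * (n + 2) :=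
    Nat.add_one_mul_choose_eq b (n + 1)
  zify at central subset_choose absorb₁ absorb₂ ⊢
  linear_combination ((n : ℤ) + 1) * ((b + n + 1).choose (2 * n + 2) : ℤ) * central +
    ((n : ℤ) + 1) * subset_choose + (b.choose (n + 1) : ℤ) * absorb₁ +
    ((b + n + 1).choose n : ℤ) * absorb₂

theorem cast_allEvenInternalCount_eq (b n : ℕ) :
    (allEvenInternalCount (b + 1) (n + 2) : ℚ) =
      1 / (((n + 2 : ℕ) : ℚ) - 1) *
        (binom (((n + 2 : ℕ) : ℤ) + b - 1) (((n + 2 : ℕ) : ℤ) - 2) : ℚ) *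
        (binom ((b : ℤ) + 1) ((n + 2 : ℕ) : ℤ) : ℚ) := by
  have h₁ : ((n + 2 : ℕ) : ℤ) + b - 1 = ((b + n + 1 : ℕ) : ℤ) := by push_cast; ring
  have h₂ : ((n + 2 : ℕ) : ℤ) - 2 = n := by push_cast; ring
  have h₃ : (b : ℤ) + 1 = ((b + 1 : ℕ) : ℤ) := by push_cast; ring
  have key : ((n + 1 : ℕ) : ℚ) * ((catalan (n + 1) * (b + n + 1).choose (2 * n + 2) : ℕ) : ℚ) =
      ((b + n + 1).choose n * (b + 1).choose (n + 2) : ℕ) := by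
    rw [← Nat.cast_mul, succ_mul_catalan_mul_choose]
  rw [h₁, h₂, h₃, binom_natCast, binom_natCast, allEvenInternalCount_succ_succ,
    show b + (n + 1) = b + n + 1 by ring, show 2 * (n + 1) = 2 * n + 2 by ring,
    show ((n + 2 : ℕ) : ℚ) - 1 = n + 1 by push_cast; ring]
  push_cast at key ⊢
  field_simp
  linear_combination key

namespace PlaneTree

def cons (c : PlaneTree) : PlaneTree → PlaneTree
  | node ts => node (c :: ts)

theorem induction_cons {motive : PlaneTree → Prop} (leaf : motive (node []))
    (cons : ∀ c T, motive c → motive T → motive (cons c T)) : ∀ T, motive T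
  | node [] => leaf
  | node (c :: ts) => cons c (node ts) (induction_cons leaf cons c)
      (induction_cons leaf cons (node ts))
termination_by T => sizeOf T

theorem eq_leaf_or_eq_cons (T : PlaneTree) : T = node [] ∨ ∃ c R, T = cons c R := by
  obtain ⟨_ | ⟨c, ts⟩⟩ := T
  · exact .inl rfl
  · exact .inr ⟨c, node ts, rfl⟩

theorem exists_eq_cons_of_ne_leaf {T : PlaneTree} (hT : T ≠ node []) : ∃ c R, T = cons c R :=
  (eq_leaf_or_eq_cons T).resolve_left hT

@[simp] theorem numEdges_leaf : numEdges (node []) = 0 := by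
  simp [numEdges]

@[simp] theorem numEdges_cons (c R : PlaneTree) :
    numEdges (cons c R) = numEdges c + 1 + numEdges R := by
  cases R; simp [cons, numEdges, add_assoc]

@[simp] theorem countVert_false_leaf : countVert false (node []) = 0 := by
  simp [countVert]

@[simp] theorem countVert_true_leaf : countVert true (node []) = 1 := by
  simp [countVert]

@[simp] theorem countVert_cons (e : Bool) (c R : PlaneTree) :
    countVert e (cons c R) = countVert (!e) c + countVert e R := by
  cases R; simp [cons, countVert, add_left_comm]

@[simp] theorem countInternal_leaf (e : Bool) : countInternal e (node []) = 0 := by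
  simp [countInternal]

@[simp] theorem countInternal_cons (e : Bool) (c R : PlaneTree) :
    countInternal e (cons c R) =
      countInternal (!e) c + countInternal e R + if e ∧ R = node [] then 1 else 0 := by
  obtain ⟨_ | _⟩ := R <;> cases e <;> simp [cons, countInternal, add_comm, add_left_comm]

theorem countVert_false_add_countVert_true (T : PlaneTree) :
    countVert false T + countVert true T = numEdges T + 1 := by
  induction T using induction_cons with
  | leaf => simp
  | cons c R hc hR =>
    simp only [countVert_cons, Bool.not_false, Bool.not_true, numEdges_cons]
    omega

theorem countInternal_le_countVert (e : Bool) (T : PlaneTree) :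
    countInternal e T ≤ countVert e T := by
  induction T using induction_cons generalizing e with
  | leaf => simp
  | cons c R hc hR =>
    have := hc (!e)
    rw [countInternal_cons, countVert_cons]
    split_ifs with h
    · obtain ⟨rfl, rfl⟩ := h
      simp only [countInternal_leaf, countVert_true_leaf]
      omega
    · have := hR e
      omega

theorem one_le_countVert_true (T : PlaneTree) : 1 ≤ countVert true T := by
  induction T using induction_cons with
  | leaf => simp
  | cons c R hc hR =>
    rw [countVert_cons]
    omega

theorem eq_leaf_of_countVert_false_eq_zero {T : PlaneTree} (h : countVert false T = 0) :
    T = node [] := by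
  rcases eq_leaf_or_eq_cons T with rfl | ⟨c, R, rfl⟩
  · rfl
  · have := one_le_countVert_true c
    rw [countVert_cons, Bool.not_false] at h
    omega

theorem finite_setOf_numEdges_lt (n : ℕ) : {T | numEdges T < n}.Finite := by
  induction n with
  | zero => simp
  | succ n ih =>
    refine ((Set.finite_singleton (node [])).union
      ((ih.prod ih).image fun p => cons p.1 p.2)).subset ?_
    intro T hT
    rcases eq_leaf_or_eq_cons T with rfl | ⟨c, R, rfl⟩
    · exact .inl rfl
    · have : numEdges c + 1 + numEdges R < n + 1 := numEdges_cons c R ▸ hT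
      exact .inr ⟨(c, R), ⟨show numEdges c < n by omega, show numEdges R < n by omega⟩, rfl⟩

def allEvenInternal (m l : ℕ) : Set PlaneTree :=
  {T | countVert false T = m ∧ countVert true T = l ∧ countInternal true T = l}

theorem allEvenInternal_finite (m l : ℕ) : (allEvenInternal m l).Finite :=
  (finite_setOf_numEdges_lt (m + l)).subset fun T ⟨hm, hl, _⟩ => by
    have := countVert_false_add_countVert_true T
    show numEdges T < m + l
    omega

noncomputable def allEvenInternalFinset (m l : ℕ) : Finset PlaneTree :=
  (allEvenInternal_finite m l).toFinset

local notation "𝒜" => allEvenInternalFinset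

@[simp] theorem mem_allEvenInternalFinset {m l : ℕ} {T : PlaneTree} :
    T ∈ 𝒜 m l ↔ countVert false T = m ∧ countVert true T = l ∧ countInternal true T = l := by
  simp [allEvenInternalFinset, allEvenInternal]

theorem ne_leaf_of_mem_allEvenInternalFinset {m l : ℕ} {T : PlaneTree} (h : T ∈ 𝒜 m l) :
    T ≠ node [] := by
  rintro rfl
  rw [mem_allEvenInternalFinset, countVert_true_leaf, countInternal_leaf] at h
  omega

theorem allEvenInternalFinset_zero_left (l : ℕ) : 𝒜 0 l = ∅ :=
  eq_empty_of_forall_notMem fun _ hT =>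
    ne_leaf_of_mem_allEvenInternalFinset hT
      (eq_leaf_of_countVert_false_eq_zero (mem_allEvenInternalFinset.1 hT).1)

theorem allEvenInternalFinset_zero_right (m : ℕ) : 𝒜 m 0 = ∅ :=
  eq_empty_of_forall_notMem fun T hT =>
    (one_le_countVert_true T).not_gt (by rw [(mem_allEvenInternalFinset.1 hT).2.1]; omega)

theorem allEvenInternalFinset_one_one : 𝒜 1 1 = {cons (node []) (node [])} := by
  ext T
  rw [mem_allEvenInternalFinset, mem_singleton]
  constructor
  · rintro ⟨h1, h1', hi⟩
    obtain ⟨c, R, rfl⟩ := exists_eq_cons_of_ne_leaf (T := T) (by rintro rfl; simp at hi)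
    have := one_le_countVert_true c
    simp only [countVert_cons, Bool.not_false, Bool.not_true] at h1 h1'
    obtain rfl := eq_leaf_of_countVert_false_eq_zero (by omega : countVert false R = 0)
    obtain rfl := eq_leaf_of_countVert_false_eq_zero (by simpa using h1' : countVert false c = 0)
    rfl
  · rintro rfl
    simp

theorem cons_leaf_mem_allEvenInternalFinset {m l : ℕ} {R : PlaneTree} (hR : R ≠ node []) :
    cons (node []) R ∈ 𝒜 (m + 1) l ↔ R ∈ 𝒜 m l := by
  simp only [mem_allEvenInternalFinset, countVert_cons, countInternal_cons, Bool.not_false,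
    Bool.not_true, countVert_true_leaf, countVert_false_leaf, countInternal_leaf, hR, and_false,
    if_false]
  omega

def graft (u : PlaneTree) : PlaneTree → PlaneTree
  | node (c :: ts) => node (cons u c :: ts)
  | T => T

theorem graft_cons (u c R : PlaneTree) : graft u (cons c R) = cons (cons u c) R := by
  cases R; rfl

theorem countVert_cons_cons (e : Bool) (u c R : PlaneTree) :
    countVert e (cons (cons u c) R) = countVert e u + countVert e (cons c R) := by
  simp only [countVert_cons, Bool.not_not]
  omega

theorem countInternal_true_cons_cons (u c R : PlaneTree) :
    countInternal true (cons (cons u c) R) =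
      countInternal true u + countInternal true (cons c R) := by
  simp only [countInternal_cons, Bool.not_true, Bool.not_false, Bool.false_eq_true, false_and,
    if_false, add_zero]
  omega

/-- The index records the vertex counts of the detached subtree and of the rest, so that the
grafting data of given total counts are counted by `convSq`. -/
abbrev GraftData := Σ _ : (ℕ × ℕ) × (ℕ × ℕ), PlaneTree × PlaneTree

def GraftData.ofPair (u R : PlaneTree) : GraftData :=
  ⟨((countVert false u, countVert false R), (countVert true u, countVert true R)), (u, R)⟩

noncomputable def graftData (m l : ℕ) : Finset GraftData :=
  (antidiagonal m ×ˢ antidiagonal l).sigma fun p => 𝒜 p.1.1 p.2.1 ×ˢ 𝒜 p.1.2 p.2.2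

def splitLeftmost : PlaneTree → PlaneTree ⊕ GraftData
  | node (node [] :: ts) => .inl (node ts)
  | node (node (u :: us) :: ts) => .inr (.ofPair u (node (node us :: ts)))
  | T => .inl T

def joinLeftmost : PlaneTree ⊕ GraftData → PlaneTree
  | .inl R => cons (node []) R
  | .inr ⟨_, (u, R)⟩ => graft u R

theorem splitLeftmost_cons_leaf (R : PlaneTree) : splitLeftmost (cons (node []) R) = .inl R := by
  cases R; rfl

theorem splitLeftmost_cons_cons (u c R : PlaneTree) :
    splitLeftmost (cons (cons u c) R) = .inr (.ofPair u (cons c R)) := by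
  cases R; cases c; rfl

theorem joinLeftmost_splitLeftmost {T : PlaneTree} (hT : T ≠ node []) :
    joinLeftmost (splitLeftmost T) = T := by
  obtain ⟨c, R, rfl⟩ := exists_eq_cons_of_ne_leaf hT
  rcases eq_leaf_or_eq_cons c with rfl | ⟨u, c, rfl⟩
  · rw [splitLeftmost_cons_leaf]; rfl
  · rw [splitLeftmost_cons_cons]; exact graft_cons u c R

theorem splitLeftmost_mem {m l : ℕ} (hml : 0 < m + l) {T : PlaneTree}
    (hT : T ∈ 𝒜 (m + 1) (l + 1)) :
    splitLeftmost T ∈ (𝒜 m (l + 1)).disjSum (graftData (m + 1) (l + 1)) := by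
  obtain ⟨c, R, rfl⟩ := exists_eq_cons_of_ne_leaf (ne_leaf_of_mem_allEvenInternalFinset hT)
  rcases eq_leaf_or_eq_cons c with rfl | ⟨u, c, rfl⟩
  · have hR : R ≠ node [] := by
      rintro rfl
      obtain ⟨hm, hl, -⟩ := mem_allEvenInternalFinset.1 hT
      simp only [countVert_cons, Bool.not_false, Bool.not_true, countVert_true_leaf,
        countVert_false_leaf] at hm hl
      omega
    rw [splitLeftmost_cons_leaf, inl_mem_disjSum, ← cons_leaf_mem_allEvenInternalFinset hR]
    exact hT
  · obtain ⟨hm, hl, hi⟩ := mem_allEvenInternalFinset.1 hT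
    -- `countInternal true ≤ countVert true` on both pieces, with equality for the sum
    have hu := countInternal_le_countVert true u
    have hR := countInternal_le_countVert true (cons c R)
    rw [countVert_cons_cons] at hm hl
    rw [countInternal_true_cons_cons] at hi
    rw [splitLeftmost_cons_cons]
    simp only [graftData, GraftData.ofPair, inr_mem_disjSum, mem_sigma, mem_product,
      HasAntidiagonal.mem_antidiagonal, mem_allEvenInternalFinset, true_and]
    omega

theorem joinLeftmost_mem {m l : ℕ} {x : PlaneTree ⊕ GraftData}
    (hx : x ∈ (𝒜 m (l + 1)).disjSum (graftData (m + 1) (l + 1))) :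
    joinLeftmost x ∈ 𝒜 (m + 1) (l + 1) := by
  rcases x with R | ⟨⟨⟨a, a'⟩, ⟨b, b'⟩⟩, ⟨u, R⟩⟩
  · rw [inl_mem_disjSum] at hx
    exact (cons_leaf_mem_allEvenInternalFinset (ne_leaf_of_mem_allEvenInternalFinset hx)).2 hx
  · simp only [graftData, inr_mem_disjSum, mem_sigma, mem_product,
      HasAntidiagonal.mem_antidiagonal] at hx
    obtain ⟨⟨ha, hb⟩, hu, hR⟩ := hx
    obtain ⟨c, R, rfl⟩ := exists_eq_cons_of_ne_leaf (ne_leaf_of_mem_allEvenInternalFinset hR)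
    rw [mem_allEvenInternalFinset] at hu hR ⊢
    rw [joinLeftmost, graft_cons, countVert_cons_cons, countVert_cons_cons,
      countInternal_true_cons_cons]
    omega

theorem splitLeftmost_joinLeftmost {m l : ℕ} {x : PlaneTree ⊕ GraftData}
    (hx : x ∈ (𝒜 m (l + 1)).disjSum (graftData (m + 1) (l + 1))) :
    splitLeftmost (joinLeftmost x) = x := by
  rcases x with R | ⟨⟨⟨a, a'⟩, ⟨b, b'⟩⟩, ⟨u, R⟩⟩
  · exact splitLeftmost_cons_leaf R
  · simp only [graftData, inr_mem_disjSum, mem_sigma, mem_product] at hx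
    obtain ⟨-, hu, hR⟩ := hx
    obtain ⟨c, R, rfl⟩ := exists_eq_cons_of_ne_leaf (ne_leaf_of_mem_allEvenInternalFinset hR)
    obtain ⟨rfl, rfl, -⟩ := mem_allEvenInternalFinset.1 hu
    obtain ⟨rfl, rfl, -⟩ := mem_allEvenInternalFinset.1 hR
    rw [joinLeftmost, graft_cons, splitLeftmost_cons_cons]
    rfl

theorem card_allEvenInternalFinset_succ_succ {m l : ℕ} (hml : 0 < m + l) :
    #(𝒜 (m + 1) (l + 1)) = #(𝒜 m (l + 1)) + convSq (fun m l => #(𝒜 m l)) (m + 1) (l + 1) := by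
  rw [card_nbij' splitLeftmost joinLeftmost (fun _ => splitLeftmost_mem hml)
    (fun _ => joinLeftmost_mem)
    (fun _ hT => joinLeftmost_splitLeftmost (ne_leaf_of_mem_allEvenInternalFinset hT))
    (fun _ => splitLeftmost_joinLeftmost)]
  simp only [card_disjSum, graftData, card_sigma, card_product, convSq]

theorem solvesGraftRecursion_card_allEvenInternalFinset :
    SolvesGraftRecursion fun m l => #(𝒜 m l) where
  zero_left l := by rw [allEvenInternalFinset_zero_left, card_empty]
  zero_right m := by rw [allEvenInternalFinset_zero_right, card_empty]
  one_one := by rw [allEvenInternalFinset_one_one, card_singleton]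
  succ_succ := card_allEvenInternalFinset_succ_succ

theorem card_allEvenInternalFinset (m l : ℕ) : #(𝒜 m l) = allEvenInternalCount m l :=
  congrFun (congrFun (solvesGraftRecursion_card_allEvenInternalFinset.unique
    solvesGraftRecursion_allEvenInternalCount) m) l

theorem ncard_setOf_allEvenInternal (b l : ℕ) :
    {T : PlaneTree | T.numEdges = b + l ∧ countVert false T = b + 1 ∧
        countVert true T = l ∧ countInternal true T = l}.ncard = #(𝒜 (b + 1) l) := by
  rw [allEvenInternalFinset, ← Set.ncard_eq_toFinset_card _ (allEvenInternal_finite _ _)]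
  congr 1
  ext T
  have := countVert_false_add_countVert_true T
  simp only [allEvenInternal, Set.mem_ofPred_eq]
  omega

end PlaneTree

/-- The number of plane trees with `b+l` edges having exactly `b+1`
odd-level vertices and exactly `l` even-level vertices, all of which are internal. -/
theorem planeTrees_allEvenInternal_count (b l : ℕ) :
    (1 < l →
      ({T : PlaneTree | T.numEdges = b + l ∧ PlaneTree.countVert false T = b + 1 ∧
          PlaneTree.countVert true T = l ∧ PlaneTree.countInternal true T = l}.ncard : ℚ) =
        (1 / ((l : ℚ) - 1)) * (binom ((l : ℤ) + b - 1) ((l : ℤ) - 2) : ℚ) *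
          (binom ((b : ℤ) + 1) (l : ℤ) : ℚ)) ∧
    (l = 1 →
      {T : PlaneTree | T.numEdges = b + l ∧ PlaneTree.countVert false T = b + 1 ∧
          PlaneTree.countVert true T = l ∧ PlaneTree.countInternal true T = l}.ncard = 1) := by
  rw [PlaneTree.ncard_setOf_allEvenInternal, PlaneTree.card_allEvenInternalFinset]
  refine ⟨fun hl => ?_, fun hl => by subst hl; simp [catalan_zero]⟩
  obtain ⟨n, rfl⟩ : ∃ n, l = n + 2 := ⟨l - 2, by omega⟩
  exact cast_allEvenInternalCount_eq b n
end

section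
/- For all integers b ≥ 0 and k ≥ 1, the following identity holds: (1/(b+k))·C(b+k, k)·C(b+k, k−1) = C(b+k−1, k−1) + ∑_{l ≥ 2} (1/(l−1))·C(l+b−1, l−2)·C(b+1, l)·C(b+k−1, k−l), where the sum over l ≥ 2 has only finitely many nonzero terms (each summand vanishes once l > min(k, b+1)). -/
open scoped BigOperators

attribute [local instance] Classical.propDecidable

/-! Multiplied by `b + 1`, the `l`-th summand becomes `C(b+l-1, l-1) C(b+1, l) C(b+k-1, k-l)`
(for `l = 1` this is `(b+1) C(b+k-1, k-1)`) and the left side becomes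
`C(b+k, k) C(b+k-1, k-1)`. Trinomial revision gives
`C(b+l-1, l-1) C(b+k-1, k-l) = C(b+k-1, k-1) C(k-1, l-1)`, so the identity reduces to
Vandermonde's `∑ₗ C(b+1, l) C(k-1, l-1) = C(b+k, k)`. -/

open Finset

namespace Nat

theorem choose_add_mul_choose_add_sub (b n i : ℕ) (h : i ≤ n) :
    (b + i).choose i * (b + n).choose (n - i) = (b + n).choose n * n.choose i := by
  have := choose_mul (n := b + n) (k := b + i) (s := b) (by omega)
  rw [choose_symm_of_eq_add (show b + n = (b + i) + (n - i) by omega), choose_symm_add,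
    choose_symm_add, Nat.add_sub_cancel_left, Nat.add_sub_cancel_left] at this
  rw [mul_comm, this]

theorem sum_Icc_choose_mul_choose_sub_one (a n : ℕ) :
    ∑ l ∈ Icc 1 (n + 1), a.choose l * n.choose (l - 1) = (a + n).choose (n + 1) := by
  rw [add_choose_eq, Finset.Nat.sum_antidiagonal_eq_sum_range_succ_mk]
  calc ∑ l ∈ Icc 1 (n + 1), a.choose l * n.choose (l - 1)
      = ∑ l ∈ Icc 1 (n + 1), a.choose l * n.choose (n + 1 - l) :=
        sum_congr rfl fun l hl => by
          rw [choose_symm_of_eq_add (show n = (l - 1) + (n + 1 - l) by simp at hl; omega)]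
    _ = ∑ l ∈ range (n + 1 + 1), a.choose l * n.choose (n + 1 - l) :=
        sum_subset (fun l hl => by simp at hl ⊢; omega) fun l hl hl' => by
          obtain rfl : l = 0 := by simp at hl hl'; omega
          simp

end Nat

open Nat

theorem sum_choose_mul_choose_mul_choose (b k : ℕ) (hk : 1 ≤ k) :
    ∑ l ∈ Icc 1 k, (b + l - 1).choose (l - 1) * (b + 1).choose l * (b + k - 1).choose (k - l) =
      (b + k).choose k * (b + k - 1).choose (k - 1) := by
  obtain ⟨n, rfl⟩ : ∃ n, k = n + 1 := ⟨k - 1, by omega⟩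
  calc ∑ l ∈ Icc 1 (n + 1),
        (b + l - 1).choose (l - 1) * (b + 1).choose l * (b + (n + 1) - 1).choose (n + 1 - l)
      = ∑ l ∈ Icc 1 (n + 1), (b + n).choose n * ((b + 1).choose l * n.choose (l - 1)) :=
        sum_congr rfl fun l hl => by
          have hl : 1 ≤ l ∧ l ≤ n + 1 := by simpa using hl
          rw [show b + l - 1 = b + (l - 1) by omega, show b + (n + 1) - 1 = b + n by omega,
            show n + 1 - l = n - (l - 1) by omega, mul_right_comm,
            choose_add_mul_choose_add_sub b n (l - 1) (by omega)]
          ring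
    _ = (b + (n + 1)).choose (n + 1) * (b + (n + 1) - 1).choose (n + 1 - 1) := by
      rw [← mul_sum, sum_Icc_choose_mul_choose_sub_one, show b + 1 + n = b + (n + 1) by omega,
        show b + (n + 1) - 1 = b + n by omega, Nat.add_sub_cancel, mul_comm]

theorem narayana_lhs_eq (b k : ℕ) (hk : 1 ≤ k) :
    1 / ((b : ℚ) + k) * (b + k).choose k * (b + k).choose (k - 1) =
      (b + k).choose k * (b + k - 1).choose (k - 1) / (b + 1) := by
  obtain ⟨j, rfl⟩ : ∃ j, k = j + 1 := ⟨k - 1, by omega⟩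
  have h := choose_mul_succ_eq (b + j) j
  rw [show b + j + 1 - j = b + 1 by omega] at h
  rw [← add_assoc, Nat.add_sub_cancel, Nat.add_sub_cancel]
  have h' : ((b + j).choose j : ℚ) * (b + j + 1) = (b + j + 1).choose j * (b + 1) := by
    exact_mod_cast h
  field_simp
  push_cast
  linear_combination -(b + j + 1).choose (j + 1) * h'

theorem narayana_summand_eq (b l : ℕ) (hl : 2 ≤ l) :
    1 / ((l : ℚ) - 1) * (l + b - 1).choose (l - 2) = (b + l - 1).choose (l - 1) / (b + 1) := by
  obtain ⟨m, rfl⟩ : ∃ m, l = m + 2 := ⟨l - 2, by omega⟩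
  have h := choose_succ_right_eq (b + m + 1) m
  rw [show b + m + 1 - m = b + 1 by omega] at h
  rw [show m + 2 + b - 1 = b + m + 1 by omega, show b + (m + 2) - 1 = b + m + 1 by omega,
    show m + 2 - 1 = m + 1 by omega, Nat.add_sub_cancel]
  have h' : ((b + m + 1).choose (m + 1) : ℚ) * (m + 1) = (b + m + 1).choose m * (b + 1) := by
    exact_mod_cast h
  push_cast
  rw [show (m : ℚ) + 2 - 1 = m + 1 by ring]
  field_simp
  linear_combination -h'

/-- An identity expressing the Narayana number as a sum; the terms for
`l > min(k, b+1)` vanish, so the sum is taken over `2 ≤ l ≤ k` (the factor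
`C(b+1, l)` vanishes for `l > b+1`). -/
theorem narayana_identity (b k : ℕ) (hk : 1 ≤ k) :
    (1 / ((b : ℚ) + k)) * (Nat.choose (b + k) k : ℚ) * (Nat.choose (b + k) (k - 1) : ℚ) =
      (Nat.choose (b + k - 1) (k - 1) : ℚ) +
        ∑ l ∈ Finset.Icc 2 k,
          (1 / ((l : ℚ) - 1)) * (Nat.choose (l + b - 1) (l - 2) : ℚ) *
            (Nat.choose (b + 1) l : ℚ) * (Nat.choose (b + k - 1) (k - l) : ℚ) := by
  rw [narayana_lhs_eq b k hk, ← Nat.cast_mul, ← sum_choose_mul_choose_mul_choose b k hk,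
    ← insert_Icc_add_one_left_eq_Icc hk, sum_insert (by simp), Nat.cast_add, add_div,
    Nat.cast_sum, sum_div]
  congr 1
  · simp only [add_tsub_cancel_right, tsub_self, choose_zero_right, choose_one_right]
    field_simp
    push_cast
    ring
  · refine sum_congr rfl fun l hl => ?_
    rw [narayana_summand_eq b l (by simp at hl; omega)]
    push_cast
    ring
end

section
/- For all integers s, l_e, l_o with 1 ≤ l_e ≤ s, 1 ≤ l_o ≤ s and l_e + l_o > s, the following identity holds: ∑_{y=0}^{l_e−1} C(l_e, y)·C(l_e−y, l_e+l_o−s)·C(l_o−1, l_e−y−1) = (l_e/(l_e+l_o−s))·C(l_o−1, l_e+l_o−s−1)·C(s−1, s−l_o). -/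
open scoped BigOperators

attribute [local instance] Classical.propDecidable

/-! Swapping the two binomials, `C(le, y) C(le - y, d) = C(le, d) C(le - d, y)` with
`d = le + lo - s`, pulls `C(le, d)` out of the sum, and Vandermonde collapses what is left to
`C(s - 1, le - 1)`. Absorption, `d C(le, d) = le C(le - 1, d - 1)`, and trinomial revision,
`C(s - 1, le - 1) C(le - 1, le - d) = C(s - 1, le - d) C(lo - 1, d - 1)`, then give the
right-hand side. -/

namespace Nat

theorem choose_mul_choose_sub_comm (n k j : ℕ) :
    n.choose k * (n - k).choose j = n.choose j * (n - j).choose k := by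
  have hk := choose_mul (n := n) (Nat.le_add_right k j)
  have hj := choose_mul (n := n) (Nat.le_add_left j k)
  rw [Nat.add_sub_cancel_left] at hk
  rw [Nat.add_sub_cancel] at hj
  rw [← hk, ← hj, choose_symm_add]

theorem sum_range_choose_mul_choose (m n k : ℕ) :
    ∑ i ∈ Finset.range (k + 1), m.choose i * n.choose (k - i) = (m + n).choose k := by
  rw [add_choose_eq, Finset.Nat.sum_antidiagonal_eq_sum_range_succ_mk]

theorem sum_range_choose_mul_choose_sub_mul_choose {n : ℕ} (hn : 1 ≤ n) (d m : ℕ) :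
    ∑ y ∈ Finset.range n, n.choose y * (n - y).choose d * m.choose (n - y - 1) =
      n.choose d * (n - d + m).choose (n - 1) := by
  obtain ⟨k, rfl⟩ : ∃ k, n = k + 1 := ⟨n - 1, by omega⟩
  have hterm (y : ℕ) : (k + 1).choose y * (k + 1 - y).choose d * m.choose (k + 1 - y - 1) =
      (k + 1).choose d * ((k + 1 - d).choose y * m.choose (k - y)) := by
    rw [choose_mul_choose_sub_comm, Nat.sub_right_comm, Nat.add_sub_cancel_right, Nat.mul_assoc]
  rw [Finset.sum_congr rfl fun y _ => hterm y, ← Finset.mul_sum, sum_range_choose_mul_choose,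
    Nat.add_sub_cancel_right]

theorem mul_choose_mul_choose_pred {n d : ℕ} (hd : 1 ≤ d) (hdn : d ≤ n) (m : ℕ) :
    d * (n.choose d * (n - d + m).choose (n - 1)) =
      n * (m.choose (d - 1) * (n - d + m).choose (n - d)) := by
  have habsorption : d * n.choose d = n * (n - 1).choose (d - 1) := by
    have := add_one_mul_choose_eq (n - 1) (d - 1)
    rw [Nat.sub_add_cancel hd, Nat.sub_add_cancel (by omega)] at this
    rw [this, Nat.mul_comm]
  have hsymm : (n - 1).choose (d - 1) = (n - 1).choose (n - d) := by
    rw [← choose_symm (by omega : d - 1 ≤ n - 1)]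
    congr 1
    omega
  have hrevision := choose_mul (n := n - d + m) (by omega : n - d ≤ n - 1)
  rw [Nat.add_sub_cancel_left, (by omega : n - 1 - (n - d) = d - 1)] at hrevision
  rw [← Nat.mul_assoc, habsorption, hsymm, Nat.mul_assoc, Nat.mul_comm ((n - 1).choose _), hrevision,
    Nat.mul_comm (choose _ _)]

end Nat

theorem binomial_identity_general (s le lo : ℕ) (hle : 1 ≤ le) (hlo : 1 ≤ lo)
    (hlos : lo ≤ s) (h : s < le + lo) :
    ∑ y ∈ Finset.range le,
        (Nat.choose le y : ℚ) * (Nat.choose (le - y) (le + lo - s) : ℚ) *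
          (Nat.choose (lo - 1) (le - y - 1) : ℚ) =
      ((le : ℚ) / ((le : ℚ) + lo - s)) * (Nat.choose (lo - 1) (le + lo - s - 1) : ℚ) *
        (Nat.choose (s - 1) (s - lo) : ℚ) := by
  set d := le + lo - s with hd
  have hd1 : 1 ≤ d := by omega
  have hdle : d ≤ le := by omega
  have hdq : (le : ℚ) + lo - s = d := by
    rw [hd, Nat.cast_sub h.le]
    push_cast
    ring
  have hsum := congrArg (Nat.cast : ℕ → ℚ)
    (Nat.mul_choose_mul_choose_pred hd1 hdle (lo - 1))
  rw [← Nat.sum_range_choose_mul_choose_sub_mul_choose hle] at hsum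
  rw [hdq, (by omega : s - lo = le - d), (by omega : s - 1 = le - d + (lo - 1)),
    div_mul_eq_mul_div, div_mul_eq_mul_div, eq_div_iff (by positivity)]
  push_cast at hsum
  linear_combination hsum

/-- A binomial identity used in the enumeration of forests of small
trees (cf. Sprugnoli, eq. (6.14)). -/
theorem binomial_identity (s le lo : ℕ) (hle : 1 ≤ le) (hles : le ≤ s) (hlo : 1 ≤ lo)
    (hlos : lo ≤ s) (h : s < le + lo) :
    ∑ y ∈ Finset.range le,
        (Nat.choose le y : ℚ) * (Nat.choose (le - y) (le + lo - s) : ℚ) *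
          (Nat.choose (lo - 1) (le - y - 1) : ℚ) =
      ((le : ℚ) / ((le : ℚ) + lo - s)) * (Nat.choose (lo - 1) (le + lo - s - 1) : ℚ) *
        (Nat.choose (s - 1) (s - lo) : ℚ) :=
  binomial_identity_general s le lo hle hlo hlos h
end
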